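/- arXiv:1911.12175 — 2 statements merged into one kernel-verified Lean document; each statement's English description precedes it below -/
import Mathlib

section
/- Let X be a uniformly discrete metric space with a translation-like right action of a finitely generated group G, and let H be a group bi-Lipschitz equivalent to G via F : H → G. Equip X with the induced translation-like H-action (using orbit representatives: h·(x·g) = x·F(F⁻¹(g)·h⁻¹)). Then two points of X lie in the same G-orbit iff they lie in the same H-orbit, and the identity map descends to a bi-Lipschitz equivalence (in fact an isometry of chain metrics) between X/G and X/H. -/
/-- A translation-like (right) action of a group `K` on a metric space `X`. -/
def RightTranslationLike {K X : Type*} [Group K] [MetricSpace X]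
    (α : K → X → X) : Prop :=
  (∀ x, α 1 x = x) ∧ (∀ k₁ k₂ x, α (k₁ * k₂) x = α k₂ (α k₁ x)) ∧
  (∀ k x, α k x = x → k = 1) ∧ ∀ k, ∃ C : ℝ, ∀ x, dist x (α k x) ≤ C

/-- A chain from `x` to `y` relative to the action `α`. -/
def IsChainFrom {K X : Type*} (α : K → X → X) (x y : X)
    (l : List (X × X)) : Prop :=
  (l.map Prod.fst).head? = some x ∧ (l.map Prod.snd).getLast? = some y ∧
  l.Chain' (fun p q => ∃ k : K, α k p.2 = q.1)

/-- The chain distance on the orbit space. -/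
noncomputable def chainDist {K X : Type*} [MetricSpace X] (α : K → X → X)
    (x y : X) : ℝ :=
  sInf {s : ℝ | ∃ l : List (X × X), IsChainFrom α x y l ∧
    s = (l.map fun p => dist p.1 p.2).sum}

/-!
Fixing a representative `x₀` of each orbit, a free right action identifies the orbit with `G` via
`g ↦ x₀ · g`. Transporting the right multiplication of `H` on itself along `F` gives a free
`H`-action with the same orbits, hence the same chains and the same chain metric. Moving `x` by
`h ∈ H` amounts to moving it by some `g ∈ G` with `|g| ≤ C |h|`; as balls in `G` are finite, the
new action still moves points a bounded distance.
-/

structure IsFreeRightAction {K X : Type*} [Group K] (α : K → X → X) : Prop where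
  one_apply : ∀ x, α 1 x = x
  mul_apply : ∀ k₁ k₂ x, α (k₁ * k₂) x = α k₂ (α k₁ x)
  eq_one_of_apply_eq : ∀ k x, α k x = x → k = 1

theorem rightTranslationLike_iff {K X : Type*} [Group K] [MetricSpace X] {α : K → X → X} :
    RightTranslationLike α ↔ IsFreeRightAction α ∧ ∀ k, ∃ C : ℝ, ∀ x, dist x (α k x) ≤ C :=
  ⟨fun ⟨h₁, h₂, h₃, h₄⟩ => ⟨⟨h₁, h₂, h₃⟩, h₄⟩, fun ⟨⟨h₁, h₂, h₃⟩, h₄⟩ => ⟨h₁, h₂, h₃, h₄⟩⟩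

theorem exists_dist_apply_le_of_finite {K X : Type*} [MetricSpace X] {α : K → X → X}
    (hα : ∀ k, ∃ C : ℝ, ∀ x, dist x (α k x) ≤ C) {S : Set K} (hS : S.Finite) :
    ∃ M : ℝ, ∀ k ∈ S, ∀ x, dist x (α k x) ≤ M := by
  choose c hc using hα
  obtain ⟨M, hM⟩ := (hS.image c).bddAbove
  exact ⟨M, fun k hk x => (hc k x).trans (hM ⟨k, hk, rfl⟩)⟩

theorem dist_one_inv_mul_le_of_lipschitz {H G : Type*} [Group H] [Group G]
    [MetricSpace H] [MetricSpace G]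
    (hinvH : ∀ a b c : H, dist (a * b) (a * c) = dist b c)
    (hinvG : ∀ a b c : G, dist (a * b) (a * c) = dist b c)
    {F : H → G} {C : ℝ} (hF : ∀ a b, dist (F a) (F b) ≤ C * dist a b) (a h : H) :
    dist 1 ((F a)⁻¹ * F (a * h)) ≤ C * dist 1 h :=
  calc dist 1 ((F a)⁻¹ * F (a * h))
      = dist (F a) (F (a * h)) := by rw [← hinvG (F a), mul_one, mul_inv_cancel_left]
    _ ≤ C * dist a (a * h) := hF _ _
    _ = C * dist 1 h := by rw [← hinvH a 1 h, mul_one]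

theorem isChainFrom_congr {K K' X : Type*} {α : K → X → X} {β : K' → X → X}
    (horb : ∀ x y, (∃ k, α k x = y) ↔ ∃ k, β k x = y) (x y : X) (l : List (X × X)) :
    IsChainFrom α x y l ↔ IsChainFrom β x y l := by
  simp only [IsChainFrom, horb]

theorem chainDist_congr {K K' X : Type*} [MetricSpace X] {α : K → X → X} {β : K' → X → X}
    (horb : ∀ x y, (∃ k, α k x = y) ↔ ∃ k, β k x = y) (x y : X) :
    chainDist α x y = chainDist β x y := by
  simp only [chainDist, isChainFrom_congr horb]

namespace IsFreeRightAction

variable {G H X : Type*} [Group G] [Group H] {α : G → X → X}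

theorem apply_injective (hα : IsFreeRightAction α) (x : X) : Function.Injective (α · x) := by
  intro k₁ k₂ h
  have : α (k₁⁻¹ * k₂) (α k₁ x) = α k₁ x := by
    rw [← hα.mul_apply, mul_inv_cancel_left]
    exact h.symm
  exact inv_mul_eq_one.mp (hα.eq_one_of_apply_eq _ _ this)

variable (hα : IsFreeRightAction α)

def orbitSetoid : Setoid X where
  r x y := ∃ g, α g x = y
  iseqv :=
    ⟨fun x => ⟨1, hα.one_apply x⟩,
     fun ⟨g, hg⟩ => ⟨g⁻¹, by rw [← hg, ← hα.mul_apply, mul_inv_cancel, hα.one_apply]⟩,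
     fun ⟨g₁, hg₁⟩ ⟨g₂, hg₂⟩ => ⟨g₁ * g₂, by rw [hα.mul_apply, hg₁, hg₂]⟩⟩

noncomputable def rep (x : X) : X :=
  (Quotient.mk hα.orbitSetoid x).out

theorem rep_apply (g : G) (x : X) : hα.rep (α g x) = hα.rep x :=
  congrArg Quotient.out (Quotient.sound (hα.orbitSetoid.symm ⟨g, rfl⟩))

theorem exists_apply_rep_eq (x : X) : ∃ g, α g (hα.rep x) = x :=
  Quotient.exact (Quotient.out_eq (Quotient.mk hα.orbitSetoid x))

noncomputable def coord (x : X) : G :=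
  (hα.exists_apply_rep_eq x).choose

theorem apply_coord_rep (x : X) : α (hα.coord x) (hα.rep x) = x :=
  (hα.exists_apply_rep_eq x).choose_spec

theorem coord_eq_of_apply_rep_eq {g : G} {x : X} (h : α g (hα.rep x) = x) : hα.coord x = g :=
  hα.apply_injective (hα.rep x) ((hα.apply_coord_rep x).trans h.symm)

/-- The action of `H` obtained by identifying each orbit with `G`, and then `G` with `H` via `F`. -/
noncomputable def transfer (F : H ≃ G) (h : H) (x : X) : X :=
  α (F (F.symm (hα.coord x) * h)) (hα.rep x)

variable (F : H ≃ G)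

theorem transfer_eq_apply (h : H) (x : X) :
    hα.transfer F h x = α ((hα.coord x)⁻¹ * F (F.symm (hα.coord x) * h)) x := by
  have e := hα.mul_apply (hα.coord x) ((hα.coord x)⁻¹ * F (F.symm (hα.coord x) * h)) (hα.rep x)
  rwa [mul_inv_cancel_left, hα.apply_coord_rep] at e

theorem rep_transfer (h : H) (x : X) : hα.rep (hα.transfer F h x) = hα.rep x := by
  rw [transfer_eq_apply, rep_apply]

theorem coord_transfer (h : H) (x : X) :
    hα.coord (hα.transfer F h x) = F (F.symm (hα.coord x) * h) :=
  hα.coord_eq_of_apply_rep_eq (by rw [rep_transfer]; rfl)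

theorem isFreeRightAction_transfer : IsFreeRightAction (hα.transfer F) where
  one_apply x := by rw [transfer, mul_one, F.apply_symm_apply, hα.apply_coord_rep]
  mul_apply h₁ h₂ x := by
    rw [transfer, transfer, rep_transfer, coord_transfer, F.symm_apply_apply, mul_assoc]
  eq_one_of_apply_eq h x hx := by
    nth_rewrite 2 [← hα.apply_coord_rep x] at hx
    have := congrArg F.symm (hα.apply_injective _ hx)
    rwa [F.symm_apply_apply, mul_eq_left] at this

theorem exists_transfer_eq_iff (x y : X) :
    (∃ g, α g x = y) ↔ ∃ h, hα.transfer F h x = y := by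
  constructor
  · rintro ⟨g, rfl⟩
    refine ⟨(F.symm (hα.coord x))⁻¹ * F.symm (hα.coord x * g), ?_⟩
    rw [transfer, mul_inv_cancel_left, F.apply_symm_apply, hα.mul_apply, hα.apply_coord_rep]
  · rintro ⟨h, rfl⟩
    exact ⟨_, (hα.transfer_eq_apply F h x).symm⟩

theorem rightTranslationLike_transfer [MetricSpace H] [MetricSpace G] [MetricSpace X]
    (hbdd : ∀ g, ∃ C : ℝ, ∀ x, dist x (α g x) ≤ C)
    (hinvH : ∀ a b c : H, dist (a * b) (a * c) = dist b c)
    (hinvG : ∀ a b c : G, dist (a * b) (a * c) = dist b c)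
    (hfinG : ∀ R : ℝ, {g : G | dist 1 g ≤ R}.Finite)
    {C : ℝ} (hF : ∀ a b, dist (F a) (F b) ≤ C * dist a b) :
    RightTranslationLike (hα.transfer F) := by
  refine rightTranslationLike_iff.mpr ⟨hα.isFreeRightAction_transfer F, fun h => ?_⟩
  obtain ⟨M, hM⟩ := exists_dist_apply_le_of_finite hbdd (hfinG (C * dist 1 h))
  refine ⟨M, fun x => ?_⟩
  have hlen := dist_one_inv_mul_le_of_lipschitz hinvH hinvG hF (F.symm (hα.coord x)) h
  rw [F.apply_symm_apply] at hlen
  rw [transfer_eq_apply]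
  exact hM _ hlen x

end IsFreeRightAction

theorem quotient_biLipschitz_of_biLipschitz_group_general
    {H G X : Type*} [Group H] [Group G]
    [MetricSpace H] [MetricSpace G] [MetricSpace X]
    (hinvH : ∀ a b c : H, dist (a * b) (a * c) = dist b c)
    (hinvG : ∀ a b c : G, dist (a * b) (a * c) = dist b c)
    (hfinG : ∀ R : ℝ, {g : G | dist 1 g ≤ R}.Finite)
    (F : H ≃ G) (C : ℝ)
    (hbil : ∀ a b : H, dist a b / C ≤ dist (F a) (F b) ∧
      dist (F a) (F b) ≤ C * dist a b)
    (α : G → X → X) (hα : RightTranslationLike α) :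
    ∃ β : H → X → X, RightTranslationLike β ∧
      (∀ x y : X, (∃ g, α g x = y) ↔ (∃ h, β h x = y)) ∧
      (∀ x y : X, chainDist α x y = chainDist β x y) := by
  obtain ⟨hfree, hbdd⟩ := rightTranslationLike_iff.mp hα
  have horb := hfree.exists_transfer_eq_iff F
  exact ⟨hfree.transfer F,
    hfree.rightTranslationLike_transfer F hbdd hinvH hinvG hfinG fun a b => (hbil a b).2,
    horb, chainDist_congr horb⟩

/-- Let `X` be uniformly discrete with a translation-like (right)
action `α` of a finitely generated group `G` (word metric: left-invariant with
finite balls), and let `H` be bi-Lipschitz to `G` via `F : H ≃ G`.  Then `X`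
carries an induced translation-like `H`-action `β` whose orbits agree with the
`G`-orbits and whose chain metric coincides with that of the `G`-action, so the
identity descends to a bi-Lipschitz equivalence (in fact an isometry) between
`X/G` and `X/H`. -/
theorem quotient_biLipschitz_of_biLipschitz_group
    {H G X : Type*} [Group H] [Group G]
    [MetricSpace H] [MetricSpace G] [MetricSpace X]
    (hinvH : ∀ a b c : H, dist (a * b) (a * c) = dist b c)
    (hinvG : ∀ a b c : G, dist (a * b) (a * c) = dist b c)
    (hfinG : ∀ R : ℝ, {g : G | dist 1 g ≤ R}.Finite)
    (hud : ∃ ε > (0 : ℝ), ∀ x y : X, x ≠ y → ε ≤ dist x y)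
    (F : H ≃ G) (C : ℝ) (hC : 1 ≤ C)
    (hbil : ∀ a b : H, dist a b / C ≤ dist (F a) (F b) ∧
      dist (F a) (F b) ≤ C * dist a b)
    (α : G → X → X) (hα : RightTranslationLike α) :
    ∃ β : H → X → X, RightTranslationLike β ∧
      (∀ x y : X, (∃ g, α g x = y) ↔ (∃ h, β h x = y)) ∧
      (∀ x y : X, chainDist α x y = chainDist β x y) :=
  quotient_biLipschitz_of_biLipschitz_group_general hinvH hinvG hfinG F C hbil α hα
end

section
/- Let G and H be finitely generated groups, Λ a finitely generated group containing a subgroup Λ₀, and suppose: Γ is bi-Lipschitz to Λ, and Δ is bi-Lipschitz to Λ₀ (all with word metrics). Since Λ₀ acts translation-like on Λ by right multiplication, Δ admits a translation-like action on Γ, and the chain-metric quotient Γ/Δ is bi-Lipschitz to the coset space Λ/Λ₀ with its chain metric. -/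
/-!
Decompose `Λ ≃ (Λ ⧸ Λ₀) × Λ₀` by writing `g = r * h` with `r` a fixed representative of the coset
`g Λ₀`, and replace the `Λ₀`-factor by `Δ` through `ψ`. Right multiplication of `Δ` on that factor,
pulled back to `Γ` through `φ`, is a free action whose orbits are the `φ`-preimages of the cosets.
Its displacement is bounded because `dist (r * ψ a) (r * ψ (a * d)) = dist (ψ a) (ψ (a * d))`
is controlled by `dist a (a * d) = dist 1 d`. Since `φ` matches the orbit relations and is
bi-Lipschitz, it transports chains to chains, changing their lengths by at most the factor `Kφ`.
-/

open QuotientGroup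

section CosetDecomposition

variable {G : Type*} [Group G] (H : Subgroup G)

lemma QuotientGroup.mk_eq_mk_iff_exists_mul_eq (a b : G) :
    (mk a : G ⧸ H) = mk b ↔ ∃ h : H, a * h = b := by
  rw [QuotientGroup.eq]
  constructor
  · exact fun hab => ⟨⟨a⁻¹ * b, hab⟩, mul_inv_cancel_left a b⟩
  · rintro ⟨h, rfl⟩
    simp

lemma QuotientGroup.out_inv_mul_mem (g : G) : (mk g : G ⧸ H).out⁻¹ * g ∈ H :=
  (QuotientGroup.eq).mp (QuotientGroup.out_eq' _)

noncomputable def cosetProdEquiv {D : Type*} (ψ : D ≃ H) : G ≃ (G ⧸ H) × D where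
  toFun g := (mk g, ψ.symm ⟨(mk g : G ⧸ H).out⁻¹ * g, out_inv_mul_mem H g⟩)
  invFun p := p.1.out * ψ p.2
  left_inv g := by simp
  right_inv := by
    rintro ⟨q, a⟩
    have hq : (mk (q.out * ψ a) : G ⧸ H) = q := by
      rw [QuotientGroup.mk_mul_of_mem _ (ψ a).2, QuotientGroup.out_eq']
    ext
    · exact hq
    · simp [hq]

end CosetDecomposition

section FiberRightMul

variable {X Q D : Type*} [Group D] (e : X ≃ Q × D)

def fiberRightMul (d : D) (x : X) : X := e.symm ((e x).1, (e x).2 * d)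

lemma fiberRightMul_one (x : X) : fiberRightMul e 1 x = x := by
  simp [fiberRightMul]

lemma fiberRightMul_mul (d₁ d₂ : D) (x : X) :
    fiberRightMul e (d₁ * d₂) x = fiberRightMul e d₂ (fiberRightMul e d₁ x) := by
  simp [fiberRightMul, mul_assoc]

lemma eq_one_of_fiberRightMul_eq {d : D} {x : X} (h : fiberRightMul e d x = x) : d = 1 := by
  have h' := congrArg (fun y => (e y).2) h
  simpa [fiberRightMul] using h'

lemma exists_fiberRightMul_eq_iff (x y : X) :
    (∃ d, fiberRightMul e d x = y) ↔ (e x).1 = (e y).1 := by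
  constructor
  · rintro ⟨d, rfl⟩
    simp [fiberRightMul]
  · intro hxy
    refine ⟨(e x).2⁻¹ * (e y).2, e.injective ?_⟩
    simp [fiberRightMul, hxy]

lemma fiberRightMul_equiv_trans {W : Type*} (φ : W ≃ X) (d : D) (w : W) :
    fiberRightMul (φ.trans e) d w = φ.symm (fiberRightMul e d (φ w)) :=
  rfl

lemma rightTranslationLike_fiberRightMul [MetricSpace X]
    (hbdd : ∀ d, ∃ C : ℝ, ∀ x, dist x (fiberRightMul e d x) ≤ C) :
    RightTranslationLike (fiberRightMul e) :=
  ⟨fiberRightMul_one e, fiberRightMul_mul e, fun _ _ => eq_one_of_fiberRightMul_eq e, hbdd⟩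

end FiberRightMul

lemma dist_fiberRightMul_cosetProdEquiv_le {G D : Type*} [Group G] [Group D]
    [MetricSpace G] [MetricSpace D] {H : Subgroup G} (ψ : D ≃ H) {K : ℝ}
    (hinvG : ∀ a b c : G, dist (a * b) (a * c) = dist b c)
    (hinvD : ∀ a b c : D, dist (a * b) (a * c) = dist b c)
    (hψ : ∀ a b : D, dist (ψ a : G) (ψ b : G) ≤ K * dist a b) (d : D) (g : G) :
    dist g (fiberRightMul (cosetProdEquiv H ψ) d g) ≤ K * dist 1 d := by
  set r : G := (mk g : G ⧸ H).out
  set a : D := ψ.symm ⟨r⁻¹ * g, out_inv_mul_mem H g⟩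
  have hg : g = r * ψ a := by simp [a]
  calc dist g (fiberRightMul (cosetProdEquiv H ψ) d g)
      = dist (r * ψ a) (r * ψ (a * d)) := by rw [← hg]; rfl
    _ = dist (ψ a : G) (ψ (a * d)) := hinvG _ _ _
    _ ≤ K * dist a (a * d) := hψ _ _
    _ = K * dist 1 d := by rw [← hinvD a 1 d, mul_one]

section ChainDist

variable {K X K' Y : Type*}

lemma IsChainFrom.map {α : K → X → X} {α' : K' → Y → Y} {f : X → Y}
    (hrel : ∀ a b, (∃ k, α k a = b) → ∃ k', α' k' (f a) = f b)
    {x y : X} {l : List (X × X)} (hl : IsChainFrom α x y l) :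
    IsChainFrom α' (f x) (f y) (l.map (Prod.map f f)) := by
  obtain ⟨hhead, hlast, hchain⟩ := hl
  refine ⟨?_, ?_, ?_⟩
  · simpa [List.map_map, List.head?_map] using congrArg (Option.map f) hhead
  · simpa [List.map_map, List.getLast?_map] using congrArg (Option.map f) hlast
  · exact List.isChain_map_of_isChain (Prod.map f f) (fun _ _ h => hrel _ _ h) hchain

variable [MetricSpace X] [MetricSpace Y]

lemma chainDist_bddBelow (α : K → X → X) (x y : X) :
    BddBelow {s : ℝ | ∃ l : List (X × X), IsChainFrom α x y l ∧
      s = (l.map fun p => dist p.1 p.2).sum} := by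
  refine ⟨0, ?_⟩
  rintro _ ⟨l, -, rfl⟩
  refine List.sum_nonneg fun _ hs => ?_
  obtain ⟨p, -, rfl⟩ := List.mem_map.mp hs
  exact dist_nonneg

lemma chainDist_map_le (α : K → X → X) (α' : K' → Y → Y) (f : X → Y) {C : ℝ} (hC : 0 < C)
    (hrel : ∀ a b, (∃ k, α k a = b) → ∃ k', α' k' (f a) = f b)
    (hf : ∀ a b, dist (f a) (f b) ≤ C * dist a b) (x y : X) :
    chainDist α' (f x) (f y) ≤ C * chainDist α x y := by
  rw [chainDist, chainDist, ← div_le_iff₀' hC]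
  have hsingleton : IsChainFrom α x y [(x, y)] := ⟨rfl, rfl, List.isChain_singleton _⟩
  refine le_csInf ⟨_, [(x, y)], hsingleton, rfl⟩ ?_
  rintro _ ⟨l, hl, rfl⟩
  rw [div_le_iff₀' hC]
  calc _ ≤ ((l.map (Prod.map f f)).map fun p => dist p.1 p.2).sum :=
        csInf_le (chainDist_bddBelow α' _ _) ⟨_, hl.map hrel, rfl⟩
    _ ≤ (l.map fun p => C * dist p.1 p.2).sum := by
        rw [List.map_map]
        exact List.sum_le_sum fun p _ => hf p.1 p.2
    _ = C * (l.map fun p => dist p.1 p.2).sum := by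
        rw [← List.sum_map_mul_left]

end ChainDist

theorem coarse_model_transfer_general
    {Γ Δ Λ : Type*} [Group Γ] [Group Δ] [Group Λ]
    [MetricSpace Γ] [MetricSpace Δ] [MetricSpace Λ]
    (hinvΔ : ∀ a b c : Δ, dist (a * b) (a * c) = dist b c)
    (hinvΛ : ∀ a b c : Λ, dist (a * b) (a * c) = dist b c)
    (Λ₀ : Subgroup Λ)
    (φ : Γ ≃ Λ) (Kφ : ℝ) (hKφ : 1 ≤ Kφ)
    (hφ : ∀ x y : Γ, dist x y / Kφ ≤ dist (φ x) (φ y) ∧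
      dist (φ x) (φ y) ≤ Kφ * dist x y)
    (ψ : Δ ≃ Λ₀) (Kψ : ℝ)
    (hψ : ∀ x y : Δ, dist x y / Kψ ≤ dist (ψ x : Λ) (ψ y : Λ) ∧
      dist (ψ x : Λ) (ψ y : Λ) ≤ Kψ * dist x y) :
    ∃ β : Δ → Γ → Γ, RightTranslationLike β ∧
      (∀ x y : Γ, (∃ d : Δ, β d x = y) ↔ (∃ h : Λ₀, φ x * (h : Λ) = φ y)) ∧
      ∃ K ≥ (1 : ℝ), ∀ x y : Γ,
        chainDist β x y / K ≤
          chainDist (fun (h : Λ₀) (g : Λ) => g * (h : Λ)) (φ x) (φ y) ∧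
        chainDist (fun (h : Λ₀) (g : Λ) => g * (h : Λ)) (φ x) (φ y) ≤
          K * chainDist β x y := by
  have hKφ₀ : 0 < Kφ := one_pos.trans_le hKφ
  have hφsymm : ∀ a b, dist (φ.symm a) (φ.symm b) ≤ Kφ * dist a b := fun a b => by
    simpa [div_le_iff₀' hKφ₀] using (hφ (φ.symm a) (φ.symm b)).1
  set e := φ.trans (cosetProdEquiv Λ₀ ψ)
  have horbit (x y : Γ) :
      (∃ d, fiberRightMul e d x = y) ↔ ∃ h : Λ₀, φ x * (h : Λ) = φ y :=
    (exists_fiberRightMul_eq_iff e x y).trans (mk_eq_mk_iff_exists_mul_eq Λ₀ _ _)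
  have hdisp (d : Δ) (x : Γ) : dist x (fiberRightMul e d x) ≤ Kφ * (Kψ * dist 1 d) := by
    rw [fiberRightMul_equiv_trans]
    calc _ ≤ Kφ * dist (φ x) (fiberRightMul (cosetProdEquiv Λ₀ ψ) d (φ x)) := by
          simpa using hφsymm (φ x) _
      _ ≤ Kφ * (Kψ * dist 1 d) := by
          gcongr
          exact dist_fiberRightMul_cosetProdEquiv_le ψ hinvΛ hinvΔ (fun a b => (hψ a b).2) d _
  refine ⟨fiberRightMul e, rightTranslationLike_fiberRightMul e fun d => ⟨_, hdisp d⟩, horbit,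
    Kφ, hKφ, fun x y => ⟨?_, ?_⟩⟩
  · rw [div_le_iff₀' hKφ₀]
    simpa using chainDist_map_le _ (fiberRightMul e) φ.symm hKφ₀
      (fun a b hab => (horbit _ _).mpr (by simpa using hab)) hφsymm (φ x) (φ y)
  · exact chainDist_map_le _ _ φ hKφ₀ (fun a b => (horbit a b).mp) (fun a b => (hφ a b).2) x y

/-- Let `Γ`, `Δ`, `Λ` be finitely generated groups with word
metrics (left-invariant, with finite balls), `Λ₀ ≤ Λ` a subgroup, and suppose
`φ : Γ → Λ` and `ψ : Δ → Λ₀` are bi-Lipschitz equivalences.  Since `Λ₀` acts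
translation-like on `Λ` by right multiplication, `Δ` admits a translation-like
action `β` on `Γ`, whose orbits correspond under `φ` to the cosets of `Λ₀` in
`Λ`, and the chain-metric quotient `Γ/Δ` is bi-Lipschitz (via `φ`) to the coset
space `Λ/Λ₀` with its chain metric. -/
theorem coarse_model_transfer
    {Γ Δ Λ : Type*} [Group Γ] [Group Δ] [Group Λ]
    [MetricSpace Γ] [MetricSpace Δ] [MetricSpace Λ]
    (hinvΓ : ∀ a b c : Γ, dist (a * b) (a * c) = dist b c)
    (hinvΔ : ∀ a b c : Δ, dist (a * b) (a * c) = dist b c)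
    (hinvΛ : ∀ a b c : Λ, dist (a * b) (a * c) = dist b c)
    (hfinΓ : ∀ R : ℝ, {g : Γ | dist 1 g ≤ R}.Finite)
    (hfinΛ : ∀ R : ℝ, {g : Λ | dist 1 g ≤ R}.Finite)
    (Λ₀ : Subgroup Λ)
    (φ : Γ ≃ Λ) (Kφ : ℝ) (hKφ : 1 ≤ Kφ)
    (hφ : ∀ x y : Γ, dist x y / Kφ ≤ dist (φ x) (φ y) ∧
      dist (φ x) (φ y) ≤ Kφ * dist x y)
    (ψ : Δ ≃ Λ₀) (Kψ : ℝ) (hKψ : 1 ≤ Kψ)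
    (hψ : ∀ x y : Δ, dist x y / Kψ ≤ dist (ψ x : Λ) (ψ y : Λ) ∧
      dist (ψ x : Λ) (ψ y : Λ) ≤ Kψ * dist x y) :
    ∃ β : Δ → Γ → Γ, RightTranslationLike β ∧
      (∀ x y : Γ, (∃ d : Δ, β d x = y) ↔ (∃ h : Λ₀, φ x * (h : Λ) = φ y)) ∧
      ∃ K ≥ (1 : ℝ), ∀ x y : Γ,
        chainDist β x y / K ≤
          chainDist (fun (h : Λ₀) (g : Λ) => g * (h : Λ)) (φ x) (φ y) ∧
        chainDist (fun (h : Λ₀) (g : Λ) => g * (h : Λ)) (φ x) (φ y) ≤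
          K * chainDist β x y :=
  coarse_model_transfer_general hinvΔ hinvΛ Λ₀ φ Kφ hKφ hφ ψ Kψ hψ
end
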